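/- arXiv:1612.09246 — 10 statements merged into one kernel-verified Lean document; each statement's English description precedes it below -/
import Mathlib

section
/- Let Λ be a symmetric subset containing the identity of an lcsc group G which is relatively dense. Then the following are equivalent: (i) Λ is a uniform approximate lattice (uniformly discrete and Λ² ⊂ FΛ for some finite F); (ii) Λᵏ is uniformly discrete for all k ≥ 1; (iii) Λ⁶ is discrete; (iv) Λ³ is locally finite (i.e., closed and discrete). -/
open scoped Pointwise
open Filter Topology Metric

/-! For a left-invariant metric `dist x y = dist 1 (x⁻¹ * y)`, so a set `S` is uniformly discrete
as soon as `1` is isolated in `S⁻¹ * S`, which is `Λ ^ (2 * k)` for `S = Λ ^ k`.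
Under (i), `Λ ^ (2 * k) ⊆ F ^ (2 * k - 1) * Λ` is a finite union of translates of the uniformly
discrete set `Λ`, hence closed and discrete, which gives (ii); (iii) ⇒ (iv) is the same principle
for `Λ ^ 6 = (Λ ^ 3)⁻¹ * Λ ^ 3`. For (iv) ⇒ (i), relative density writes each `g ∈ Λ ^ 2` as
`(g * z) * z⁻¹` with `z ∈ Λ` and `g * z ∈ Λ ^ 3` in a fixed closed ball around `1`, and the closed
discrete set `Λ ^ 3` meets that compact ball in a finite set `F`. -/

def IsUniformlyDiscrete {X : Type*} [PseudoMetricSpace X] (s : Set X) : Prop :=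
  ∃ r > 0, ∀ x ∈ s, ∀ y ∈ s, x ≠ y → r ≤ dist x y

namespace IsUniformlyDiscrete

section PseudoMetric

variable {X : Type*} [PseudoMetricSpace X] {s : Set X}

theorem isDiscrete (hs : IsUniformlyDiscrete s) : IsDiscrete s := by
  obtain ⟨r, hr, hsep⟩ := hs
  refine isDiscrete_iff_forall_mem_exists_isOpen.2 fun x hx => ⟨ball x r, isOpen_ball, ?_⟩
  refine Set.eq_singleton_iff_unique_mem.2 ⟨⟨mem_ball_self hr, hx⟩, fun y ⟨hyx, hy⟩ => ?_⟩
  by_contra hne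
  exact (hsep x hx y hy (Ne.symm hne)).not_gt (mem_ball'.1 hyx)

theorem smul {M : Type*} [SMul M X] [IsIsometricSMul M X] (hs : IsUniformlyDiscrete s) (c : M) :
    IsUniformlyDiscrete (c • s) := by
  obtain ⟨r, hr, hsep⟩ := hs
  refine ⟨r, hr, ?_⟩
  rintro _ ⟨x, hx, rfl⟩ _ ⟨y, hy, rfl⟩ hne
  rw [dist_smul]
  exact hsep x hx y hy (ne_of_apply_ne _ hne)

end PseudoMetric

variable {X : Type*} [MetricSpace X] {s : Set X}

theorem isClosed (hs : IsUniformlyDiscrete s) : IsClosed s := by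
  obtain ⟨r, hr, hsep⟩ := hs
  exact isClosed_of_pairwise_le_dist hr fun x hx y hy hxy => hsep x hx y hy hxy

theorem compl_mem_codiscrete (hs : IsUniformlyDiscrete s) : sᶜ ∈ codiscrete X :=
  compl_mem_codiscrete_iff.2 ⟨hs.isClosed, hs.isDiscrete⟩

end IsUniformlyDiscrete

theorem IsClosed.finite_inter_closedBall {X : Type*} [MetricSpace X] [ProperSpace X] {s : Set X}
    (hs : IsClosed s) (hd : IsDiscrete s) (x : X) (R : ℝ) : (s ∩ closedBall x R).Finite :=
  ((isCompact_closedBall x R).inter_left hs).finite (hd.mono Set.inter_subset_left)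

theorem Set.inv_pow_mul_pow_of_inv_eq {α : Type*} [DivisionMonoid α] {s : Set α} (hs : s⁻¹ = s)
    (m n : ℕ) : (s ^ m)⁻¹ * s ^ n = s ^ (m + n) := by
  rw [← inv_pow, hs, pow_add]

section LeftInvariant

variable {G : Type*} [Group G]

theorem isUniformlyDiscrete_of_inv_mul_subset [PseudoMetricSpace G] [IsIsometricSMul G G]
    {s t : Set G} (ht : Disjoint (𝓝[≠] 1) (𝓟 t)) (hst : s⁻¹ * s ⊆ t) :
    IsUniformlyDiscrete s := by
  obtain ⟨ε, hε, hball⟩ := mem_nhdsWithin_iff.1 (disjoint_principal_right.1 ht)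
  refine ⟨ε, hε, fun x hx y hy hne => ?_⟩
  have hmem : x⁻¹ * y ∈ t := hst (Set.mul_mem_mul (Set.inv_mem_inv.2 hx) hy)
  have hne_one : x⁻¹ * y ≠ 1 := fun h => hne (inv_mul_eq_one.1 h)
  by_contra hlt
  have hdist : dist (x⁻¹ * y) 1 < ε := by
    rwa [← dist_mul_left x, mul_inv_cancel_left, mul_one, dist_comm, ← not_le]
  exact hball ⟨mem_ball.2 hdist, hne_one⟩ hmem

theorem compl_finset_mul_mem_codiscrete [MetricSpace G] [IsIsometricSMul G G] (F : Finset G)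
    {s : Set G} (hs : IsUniformlyDiscrete s) : ((F : Set G) * s)ᶜ ∈ codiscrete G := by
  refine mem_of_superset ((biInter_finset_mem F).2 fun f _ => (hs.smul f).compl_mem_codiscrete) ?_
  rintro _ hx ⟨f, hf, y, hy, rfl⟩
  exact Set.mem_iInter₂.1 hx f hf ⟨y, hy, rfl⟩

theorem subset_mul_inter_closedBall_mul_inv [PseudoMetricSpace G] [IsIsometricSMul G G]
    {Λ : Set G} {R : ℝ} (hdense : ∀ g : G, ∃ x ∈ Λ, dist g x < R) (A : Set G) :
    A ⊆ (A * Λ ∩ closedBall 1 R) * Λ⁻¹ := by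
  intro a ha
  obtain ⟨z, hz, hdz⟩ := hdense a⁻¹
  have hball : a * z ∈ closedBall 1 R := by
    rw [mem_closedBall, ← dist_mul_left a⁻¹, inv_mul_cancel_left, mul_one, dist_comm]
    exact hdz.le
  exact ⟨a * z, ⟨Set.mul_mem_mul ha hz, hball⟩, z⁻¹, Set.inv_mem_inv.2 hz, mul_inv_cancel_right a z⟩

theorem isUniformlyDiscrete_pow_of_mul_subset [MetricSpace G] [IsIsometricSMul G G]
    {Λ : Set G} (hsym : Λ⁻¹ = Λ) (hΛ : IsUniformlyDiscrete Λ) {F : Finset G}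
    (hF : Λ * Λ ⊆ F * Λ) {k : ℕ} (hk : k ≠ 0) : IsUniformlyDiscrete (Λ ^ k) := by
  classical
  have hcover : Λ ^ (k + k) ⊆ ↑(F ^ (k + k - 1)) * Λ := by
    rw [Finset.coe_pow]
    exact Set.pow_subset_pow_mul_of_sq_subset_mul (by rwa [sq]) (by omega)
  refine isUniformlyDiscrete_of_inv_mul_subset ?_ (Set.inv_pow_mul_pow_of_inv_eq hsym k k ▸ hcover)
  exact (mem_codiscrete.1 (compl_finset_mul_mem_codiscrete _ hΛ) 1).mono_right
    (by rw [compl_compl])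

end LeftInvariant

theorem uniformApproximateLattice_tfae_general
    {G : Type*} [Group G] [MetricSpace G]
    [ProperSpace G]
    (hleft : ∀ g x y : G, dist (g * x) (g * y) = dist x y)
    (Λ : Set G) (hsym : Λ⁻¹ = Λ) (hone : (1 : G) ∈ Λ)
    (hdense : ∃ R > 0, ∀ g : G, ∃ x ∈ Λ, dist g x < R) :
    List.TFAE
      [ (∃ r > 0, ∀ x ∈ Λ, ∀ y ∈ Λ, x ≠ y → r ≤ dist x y) ∧
          ∃ F : Finset G, Λ * Λ ⊆ (F : Set G) * Λ,
        ∀ k : ℕ, 1 ≤ k → ∃ r > 0, ∀ x ∈ Λ ^ k, ∀ y ∈ Λ ^ k, x ≠ y → r ≤ dist x y,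
        DiscreteTopology ↥(Λ ^ 6),
        IsClosed (Λ ^ 3) ∧ DiscreteTopology ↥(Λ ^ 3) ] := by
  have : IsIsometricSMul G G := ⟨fun g => Isometry.of_dist_eq (hleft g)⟩
  tfae_have 1 → 2
  | ⟨hΛ, F, hF⟩, k, hk => isUniformlyDiscrete_pow_of_mul_subset hsym hΛ hF (by omega)
  tfae_have 2 → 3 := fun h =>
    isDiscrete_iff_discreteTopology.1 (IsUniformlyDiscrete.isDiscrete (h 6 (by norm_num)))
  tfae_have 3 → 4 := by
    intro h
    have hiso : Disjoint (𝓝[≠] 1) (𝓟 (Λ ^ 6)) :=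
      disjoint_iff.2 (isDiscrete_iff_nhdsNE.1 (isDiscrete_iff_discreteTopology.2 h) 1
        (Set.one_mem_pow hone))
    have hΛ3 : IsUniformlyDiscrete (Λ ^ 3) :=
      isUniformlyDiscrete_of_inv_mul_subset hiso (Set.inv_pow_mul_pow_of_inv_eq hsym 3 3).le
    exact ⟨hΛ3.isClosed, isDiscrete_iff_discreteTopology.1 hΛ3.isDiscrete⟩
  tfae_have 4 → 1 := by
    rintro ⟨hclosed, hdisc⟩
    have hdisc : IsDiscrete (Λ ^ 3) := isDiscrete_iff_discreteTopology.2 hdisc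
    obtain ⟨R, -, hR⟩ := hdense
    have hinv : Λ⁻¹ * Λ ⊆ Λ ^ 3 := by
      rw [hsym, ← sq]
      exact Set.pow_subset_pow_right hone (by norm_num)
    refine ⟨isUniformlyDiscrete_of_inv_mul_subset
      (isClosed_and_discrete_iff.1 ⟨hclosed, hdisc⟩ 1) hinv,
      (hclosed.finite_inter_closedBall hdisc 1 R).toFinset, ?_⟩
    have hcover := subset_mul_inter_closedBall_mul_inv hR (Λ * Λ)
    rw [Set.Finite.coe_toFinset]
    rwa [hsym, show Λ * Λ * Λ = Λ ^ 3 by rw [pow_succ, sq]] at hcover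
  tfae_finish

/-- For a symmetric relatively dense subset `Λ ∋ 1` of an lcsc group `G`,
the following are equivalent: (i) `Λ` is a uniform approximate lattice (uniformly discrete
and `Λ² ⊆ FΛ` for some finite `F`); (ii) `Λᵏ` is uniformly discrete for all `k ≥ 1`;
(iii) `Λ⁶` is discrete; (iv) `Λ³` is locally finite (closed and discrete). -/
theorem uniformApproximateLattice_tfae
    {G : Type*} [Group G] [MetricSpace G] [IsTopologicalGroup G]
    [ProperSpace G] [SecondCountableTopology G]
    (hleft : ∀ g x y : G, dist (g * x) (g * y) = dist x y)
    (Λ : Set G) (hsym : Λ⁻¹ = Λ) (hone : (1 : G) ∈ Λ)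
    (hdense : ∃ R > 0, ∀ g : G, ∃ x ∈ Λ, dist g x < R) :
    List.TFAE
      [ (∃ r > 0, ∀ x ∈ Λ, ∀ y ∈ Λ, x ≠ y → r ≤ dist x y) ∧
          ∃ F : Finset G, Λ * Λ ⊆ (F : Set G) * Λ,
        ∀ k : ℕ, 1 ≤ k → ∃ r > 0, ∀ x ∈ Λ ^ k, ∀ y ∈ Λ ^ k, x ≠ y → r ≤ dist x y,
        DiscreteTopology ↥(Λ ^ 6),
        IsClosed (Λ ^ 3) ∧ DiscreteTopology ↥(Λ ^ 3) ] :=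
  uniformApproximateLattice_tfae_general hleft Λ hsym hone hdense
end

section
/- Let Λ ⊂ G be a uniform approximate lattice in an lcsc group G, and let Λ₀ ⊂ Λ be a symmetric subset containing the identity. Then the following are equivalent: (i) Λ₀ is a uniform approximate lattice in G; (ii) Λ₀ is relatively dense in G; (iii) Λ₀ is relatively dense in Λ (i.e., there is a finite set K₁ with Λ ⊂ Λ₀K₁). -/
open scoped Pointwise
open Filter Topology

/-- A uniform approximate lattice in a group `G` with a (proper left-invariant) metric:
a uniformly discrete, relatively dense, symmetric subset containing the identity with
`Λ² ⊆ FΛ` for some finite `F`. -/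
def IsUniformApproximateLattice {G : Type*} [Group G] [MetricSpace G] (Λ : Set G) : Prop :=
  (∃ r > 0, ∀ x ∈ Λ, ∀ y ∈ Λ, x ≠ y → r ≤ dist x y) ∧
  (∃ R > 0, ∀ g : G, ∃ x ∈ Λ, dist g x < R) ∧
  Λ⁻¹ = Λ ∧ (1 : G) ∈ Λ ∧ ∃ F : Finset G, Λ * Λ ⊆ (F : Set G) * Λ

/-!
If `Λ₀` is relatively dense in `G`, say `G = Λ₀K` with `K` compact, then every `λ ∈ Λ` is
`λ = s k` with `s ∈ Λ₀` and `k = s⁻¹λ ∈ Λ² ⊆ FΛ`; a compact set meets the uniformly discrete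
set `FΛ` in finitely many points, so finitely many `k` suffice. Conversely `Λ ⊆ Λ₀K₁` with
`K₁` finite makes `Λ₀` relatively dense (as `Λ` is), and, since `Λ = Λ⁻¹ ⊆ K₁⁻¹Λ₀`,
gives `Λ₀² ⊆ Λ² ⊆ FΛ ⊆ (FK₁⁻¹)Λ₀`.
-/

open Metric Set

theorem IsCompact.finite_inter_of_pairwise_le_dist {X : Type*} [MetricSpace X] {K S : Set X}
    {r : ℝ} (hK : IsCompact K) (hr : 0 < r) (hS : S.Pairwise (r ≤ dist · ·)) :
    (K ∩ S).Finite := by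
  have hKS : (K ∩ S).Pairwise (r ≤ dist · ·) := hS.mono inter_subset_right
  refine (hK.inter_right (isClosed_of_pairwise_le_dist hr hS)).finite
    ⟨DiscreteTopology.of_forall_le_dist hr fun x y hxy => hKS x.2 y.2 ?_⟩
  exact Subtype.coe_ne_coe.mpr hxy

section IsometricGroup

variable {G : Type*} [Group G] [MetricSpace G] [IsIsometricSMul G G]

theorem Set.Pairwise.le_dist_smul {S : Set G} {r : ℝ} (hS : S.Pairwise (r ≤ dist · ·)) (g : G) :
    (g • S).Pairwise (r ≤ dist · ·) := by
  rintro _ ⟨x, hx, rfl⟩ _ ⟨y, hy, rfl⟩ hne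
  rw [dist_smul]
  exact hS hx hy (ne_of_apply_ne _ hne)

theorem IsCompact.finite_inter_finset_mul {K Λ : Set G} {r : ℝ} (hK : IsCompact K) (hr : 0 < r)
    (hΛ : Λ.Pairwise (r ≤ dist · ·)) (F : Finset G) : (K ∩ ((F : Set G) * Λ)).Finite := by
  rw [← iUnion_mul_left_image, inter_iUnion₂]
  exact F.finite_toSet.biUnion fun f _ =>
    hK.finite_inter_of_pairwise_le_dist hr (hΛ.le_dist_smul f)

theorem mul_closedBall_one_eq_univ {Λ : Set G} {R : ℝ} (hΛ : ∀ g : G, ∃ x ∈ Λ, dist g x < R) :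
    Λ * closedBall 1 R = univ := by
  refine eq_univ_of_forall fun g => ?_
  obtain ⟨x, hx, hgx⟩ := hΛ g
  have hdist : dist (x⁻¹ * g) 1 = dist g x := by
    rw [← dist_mul_left x⁻¹ g x, inv_mul_cancel]
  exact ⟨x, hx, x⁻¹ * g, mem_closedBall.mpr (hdist ▸ hgx.le), mul_inv_cancel_left x g⟩

theorem exists_dist_lt_of_subset_mul_finset {Λ Λ₀ : Set G} {K₁ : Finset G} {R : ℝ} (hR : 0 < R)
    (hΛ : ∀ g : G, ∃ x ∈ Λ, dist g x < R) (hK₁ : Λ ⊆ Λ₀ * K₁) :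
    ∃ R₀ > 0, ∀ g : G, ∃ x ∈ Λ₀, dist g x < R₀ := by
  obtain ⟨M, hM⟩ := (isBounded_iff_subset_closedBall 1).mp K₁.finite_toSet.isBounded
  refine ⟨R + max M 0, add_pos_of_pos_of_nonneg hR (le_max_right _ _), fun g => ?_⟩
  obtain ⟨x, hx, hgx⟩ := hΛ g
  obtain ⟨s, hs, k, hk, rfl⟩ := hK₁ hx
  refine ⟨s, hs, ?_⟩
  calc dist g s ≤ dist g (s * k) + dist (s * k) (s * 1) := by
        rw [mul_one]; exact dist_triangle _ _ _
    _ = dist g (s * k) + dist k 1 := by rw [dist_mul_left]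
    _ < R + max M 0 :=
        add_lt_add_of_lt_of_le hgx ((mem_closedBall.mp (hM hk)).trans (le_max_left _ _))

theorem exists_finset_subset_mul_of_isCompact_mul_eq_univ {Λ Λ₀ K : Set G} {F : Finset G}
    {r : ℝ} (hr : 0 < r) (hΛ : Λ.Pairwise (r ≤ dist · ·)) (hF : Λ * Λ ⊆ (F : Set G) * Λ)
    (hinv : Λ₀⁻¹ ⊆ Λ) (hK : IsCompact K) (hcov : Λ₀ * K = univ) : ∃ K₁ : Finset G, Λ ⊆ Λ₀ * K₁ := by
  classical
  have hfin := hK.finite_inter_finset_mul hr hΛ F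
  refine ⟨hfin.toFinset, fun x hx => ?_⟩
  obtain ⟨s, hs, k, hk, rfl⟩ : x ∈ Λ₀ * K := hcov ▸ mem_univ x
  have hkF : k ∈ (F : Set G) * Λ := by
    simpa only [inv_mul_cancel_left] using hF (mul_mem_mul (hinv (inv_mem_inv.mpr hs)) hx)
  exact mul_mem_mul hs (hfin.mem_toFinset.mpr ⟨hk, hkF⟩)

end IsometricGroup

theorem exists_finset_mul_subset_of_subset_mul_finset {G : Type*} [Group G] {Λ Λ₀ : Set G}
    {F K₁ : Finset G} (hΛinv : Λ⁻¹ = Λ) (hsub : Λ₀ ⊆ Λ) (hsym : Λ₀⁻¹ = Λ₀)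
    (hF : Λ * Λ ⊆ (F : Set G) * Λ) (hK₁ : Λ ⊆ Λ₀ * K₁) :
    ∃ F₀ : Finset G, Λ₀ * Λ₀ ⊆ (F₀ : Set G) * Λ₀ := by
  classical
  have hΛ : Λ ⊆ (K₁ : Set G)⁻¹ * Λ₀ := by
    rw [← hΛinv, ← hsym, ← mul_inv_rev]
    exact inv_subset_inv.mpr hK₁
  refine ⟨F * K₁⁻¹, ?_⟩
  calc Λ₀ * Λ₀ ⊆ Λ * Λ := mul_subset_mul hsub hsub
    _ ⊆ (F : Set G) * Λ := hF
    _ ⊆ (F : Set G) * ((K₁ : Set G)⁻¹ * Λ₀) := mul_subset_mul_left hΛ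
    _ = ((F * K₁⁻¹ : Finset G) : Set G) * Λ₀ := by
      rw [Finset.coe_mul, Finset.coe_inv, mul_assoc]

theorem relDense_subset_of_uniformApproximateLattice_tfae_general
    {G : Type*} [Group G] [MetricSpace G]
    [ProperSpace G]
    (hleft : ∀ g x y : G, dist (g * x) (g * y) = dist x y)
    (Λ Λ₀ : Set G) (hΛ : IsUniformApproximateLattice Λ)
    (hsub : Λ₀ ⊆ Λ) (hsym : Λ₀⁻¹ = Λ₀) (hone : (1 : G) ∈ Λ₀) :
    List.TFAE
      [ IsUniformApproximateLattice Λ₀,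
        ∃ K : Set G, IsCompact K ∧ Λ₀ * K = Set.univ,
        ∃ K₁ : Finset G, Λ ⊆ Λ₀ * (K₁ : Set G) ] := by
  obtain ⟨⟨r, hr, hsep⟩, ⟨R, hR, hdense⟩, hΛinv, -, F, hF⟩ := hΛ
  have : IsIsometricSMul G G := ⟨fun g => Isometry.of_dist_eq (hleft g)⟩
  tfae_have 1 → 2 := fun ⟨_, ⟨R₀, _, hdense₀⟩, _⟩ =>
    ⟨closedBall 1 R₀, isCompact_closedBall 1 R₀, mul_closedBall_one_eq_univ hdense₀⟩
  tfae_have 2 → 3 := fun ⟨K, hK, hcov⟩ =>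
    exists_finset_subset_mul_of_isCompact_mul_eq_univ hr (fun x hx y hy => hsep x hx y hy) hF
      (hsym.symm ▸ hsub) hK hcov
  tfae_have 3 → 1 := fun ⟨K₁, hK₁⟩ =>
    ⟨⟨r, hr, fun x hx y hy => hsep x (hsub hx) y (hsub hy)⟩,
      exists_dist_lt_of_subset_mul_finset hR hdense hK₁, hsym, hone,
      exists_finset_mul_subset_of_subset_mul_finset hΛinv hsub hsym hF hK₁⟩
  tfae_finish

/-- For a symmetric subset `Λ₀ ∋ 1` of a uniform approximate lattice `Λ`,
the following are equivalent: (i) `Λ₀` is a uniform approximate lattice in `G`;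
(ii) `Λ₀` is relatively dense in `G`; (iii) `Λ₀` is relatively dense in `Λ`
(i.e. `Λ ⊆ Λ₀K₁` for some finite `K₁`). -/
theorem relDense_subset_of_uniformApproximateLattice_tfae
    {G : Type*} [Group G] [MetricSpace G] [IsTopologicalGroup G]
    [ProperSpace G] [SecondCountableTopology G]
    (hleft : ∀ g x y : G, dist (g * x) (g * y) = dist x y)
    (Λ Λ₀ : Set G) (hΛ : IsUniformApproximateLattice Λ)
    (hsub : Λ₀ ⊆ Λ) (hsym : Λ₀⁻¹ = Λ₀) (hone : (1 : G) ∈ Λ₀) :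
    List.TFAE
      [ IsUniformApproximateLattice Λ₀,
        ∃ K : Set G, IsCompact K ∧ Λ₀ * K = Set.univ,
        ∃ K₁ : Finset G, Λ ⊆ Λ₀ * (K₁ : Set G) ] :=
  relDense_subset_of_uniformApproximateLattice_tfae_general hleft Λ Λ₀ hΛ hsub hsym hone
end

section
/- Let (G, H, Γ) be a cut-and-project scheme: Γ < G × H a lattice projecting injectively to G and densely to H, with projections π_G, π_H. Let W₀ ⊂ H be compact with non-empty interior and set Λ = π_G((G × W₀) ∩ Γ). Then Λ⁻¹Λ is uniformly discrete in G; in particular Λ has finite local complexity. -/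
/-!
If `x, y ∈ Λ⁻¹Λ`, then `x⁻¹y` is the `G`-coordinate of a point of `Γ` whose `H`-coordinate lies in
the compact set `K = (W₀⁻¹W₀)⁻¹(W₀⁻¹W₀)`. Since `Γ` is closed and discrete and `G` is proper, only
finitely many such points lie over the unit ball of `G`, so the nontrivial `G`-coordinates stay at
distance at least some `r > 0` from `1`. Left invariance turns this into `d(x, y) ≥ r`.
-/

open scoped Pointwise
open Set Metric

section ModelSet

variable {G H : Type*} [Group G] [Group H]

def modelSet (Γ : Subgroup (G × H)) (W : Set H) : Set G :=
  Prod.fst '' ((Γ : Set (G × H)) ∩ univ ×ˢ W)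

theorem inv_modelSet_subset (Γ : Subgroup (G × H)) (W : Set H) :
    (modelSet Γ W)⁻¹ ⊆ modelSet Γ W⁻¹ := by
  rintro x ⟨γ, ⟨hγ, -, hγW⟩, hγx⟩
  refine ⟨γ⁻¹, ⟨Γ.inv_mem hγ, trivial, by simpa using hγW⟩, ?_⟩
  simp [Prod.fst_inv, hγx]

theorem modelSet_mul_subset (Γ : Subgroup (G × H)) (W W' : Set H) :
    modelSet Γ W * modelSet Γ W' ⊆ modelSet Γ (W * W') := by
  rintro _ ⟨_, ⟨γ, ⟨hγ, -, hγW⟩, rfl⟩, _, ⟨δ, ⟨hδ, -, hδW⟩, rfl⟩, rfl⟩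
  exact ⟨γ * δ, ⟨Γ.mul_mem hγ hδ, trivial, mul_mem_mul hγW hδW⟩, rfl⟩

theorem inv_modelSet_mul_subset (Γ : Subgroup (G × H)) (W W' : Set H) :
    (modelSet Γ W)⁻¹ * modelSet Γ W' ⊆ modelSet Γ (W⁻¹ * W') :=
  (mul_subset_mul_right (inv_modelSet_subset Γ W)).trans (modelSet_mul_subset Γ W⁻¹ W')

theorem finite_modelSet_inter_closedBall [MetricSpace G] [ProperSpace G] [TopologicalSpace H]
    {Γ : Subgroup (G × H)} (hdisc : DiscreteTopology Γ) (hclosed : IsClosed (Γ : Set (G × H)))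
    {K : Set H} (hK : IsCompact K) (x : G) (ρ : ℝ) :
    (modelSet Γ K ∩ closedBall x ρ).Finite := by
  have hfin : ((Γ : Set (G × H)) ∩ closedBall x ρ ×ˢ K).Finite :=
    ((isCompact_closedBall x ρ).prod hK).inter_left hclosed |>.finite <|
      (SetLike.isDiscrete_iff_discreteTopology.mpr hdisc).mono inter_subset_left
  refine (hfin.image Prod.fst).subset ?_
  rintro _ ⟨⟨γ, ⟨hγ, -, hγK⟩, rfl⟩, hball⟩
  exact ⟨γ, ⟨hγ, hball, hγK⟩, rfl⟩

end ModelSet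

theorem exists_pos_le_dist_of_finite_inter_closedBall {X : Type*} [MetricSpace X] {S : Set X}
    {x : X} {ρ : ℝ} (hρ : 0 < ρ) (hS : (S ∩ closedBall x ρ).Finite) :
    ∃ r > 0, ∀ s ∈ S, s ≠ x → r ≤ dist s x := by
  have hx : x ∉ (S ∩ closedBall x ρ) \ {x} := fun h => h.2 rfl
  obtain ⟨ε, hε, hball⟩ := Metric.isOpen_iff.mp hS.sdiff.isClosed.isOpen_compl x hx
  refine ⟨min ε ρ, lt_min hε hρ, fun s hs hsx => ?_⟩
  by_cases hsρ : dist s x ≤ ρ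
  · have hsε : s ∉ ball x ε := fun h => hball h ⟨⟨hs, hsρ⟩, hsx⟩
    exact (min_le_left _ _).trans (not_lt.mp hsε)
  · exact (min_le_right _ _).trans (not_le.mp hsρ).le

theorem pairwise_le_dist_of_inv_mul_subset {G : Type*} [Group G] [MetricSpace G]
    (hleft : ∀ g x y : G, dist (g * x) (g * y) = dist x y) {S T : Set G} (hST : S⁻¹ * S ⊆ T)
    {r : ℝ} (hT : ∀ t ∈ T, t ≠ 1 → r ≤ dist t 1) :
    S.Pairwise fun x y => r ≤ dist x y := by
  intro x hx y hy hxy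
  have hne : x⁻¹ * y ≠ 1 := fun h => hxy (inv_mul_eq_one.mp h)
  calc r ≤ dist (x⁻¹ * y) 1 := hT _ (hST (mul_mem_mul (inv_mem_inv.mpr hx) hy)) hne
    _ = dist (x⁻¹ * x) (x⁻¹ * y) := by rw [inv_mul_cancel, dist_comm]
    _ = dist x y := hleft _ _ _

theorem modelSet_inv_mul_uniformlyDiscrete_general
    {G H : Type*} [Group G] [MetricSpace G]
    [ProperSpace G]
    [Group H] [TopologicalSpace H] [IsTopologicalGroup H]
    (hleft : ∀ g x y : G, dist (g * x) (g * y) = dist x y)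
    (Γ : Subgroup (G × H)) (hdisc : DiscreteTopology ↥Γ)
    (hclosed : IsClosed (Γ : Set (G × H)))
    (W₀ : Set H) (hW₀ : IsCompact W₀)
    (Λ : Set G) (hΛ : Λ = Prod.fst '' ((Γ : Set (G × H)) ∩ Set.univ ×ˢ W₀)) :
    (∃ r > 0, ∀ x ∈ Λ⁻¹ * Λ, ∀ y ∈ Λ⁻¹ * Λ, x ≠ y → r ≤ dist x y) ∧
      IsClosed (Λ⁻¹ * Λ) ∧ DiscreteTopology ↥(Λ⁻¹ * Λ) := by
  have hΛΛ : Λ⁻¹ * Λ ⊆ modelSet Γ (W₀⁻¹ * W₀) := hΛ ▸ inv_modelSet_mul_subset Γ W₀ W₀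
  have hK : IsCompact ((W₀⁻¹ * W₀)⁻¹ * (W₀⁻¹ * W₀)) :=
    (hW₀.inv.mul hW₀).inv.mul (hW₀.inv.mul hW₀)
  have hdiff : (Λ⁻¹ * Λ)⁻¹ * (Λ⁻¹ * Λ) ⊆ modelSet Γ ((W₀⁻¹ * W₀)⁻¹ * (W₀⁻¹ * W₀)) :=
    (mul_subset_mul (inv_subset_inv.mpr hΛΛ) hΛΛ).trans (inv_modelSet_mul_subset Γ _ _)
  obtain ⟨r, hr, hsep⟩ := exists_pos_le_dist_of_finite_inter_closedBall one_pos
    (finite_modelSet_inter_closedBall hdisc hclosed hK 1 1)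
  have hpair := pairwise_le_dist_of_inv_mul_subset hleft hdiff hsep
  exact ⟨⟨r, hr, fun x hx y hy hxy => hpair hx hy hxy⟩, isClosed_of_pairwise_le_dist hr hpair,
    DiscreteTopology.of_forall_le_dist hr fun x y hxy => hpair x.2 y.2 (Subtype.coe_ne_coe.mpr hxy)⟩

/-- For a cut-and-project scheme `(G, H, Γ)` and a compact window `W₀ ⊆ H`
with nonempty interior, the model set `Λ = π_G((G × W₀) ∩ Γ)` has `Λ⁻¹Λ` uniformly
discrete; in particular `Λ` has finite local complexity (`Λ⁻¹Λ` closed and discrete). -/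
theorem modelSet_inv_mul_uniformlyDiscrete
    {G H : Type*} [Group G] [MetricSpace G] [IsTopologicalGroup G]
    [ProperSpace G] [SecondCountableTopology G]
    [Group H] [TopologicalSpace H] [IsTopologicalGroup H]
    [LocallyCompactSpace H] [SecondCountableTopology H]
    (hleft : ∀ g x y : G, dist (g * x) (g * y) = dist x y)
    (Γ : Subgroup (G × H)) (hdisc : DiscreteTopology ↥Γ)
    (hclosed : IsClosed (Γ : Set (G × H)))
    (hinj : Set.InjOn Prod.fst (Γ : Set (G × H)))
    (hdense : Dense (Prod.snd '' (Γ : Set (G × H))))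
    (W₀ : Set H) (hW₀ : IsCompact W₀) (hWint : (interior W₀).Nonempty)
    (Λ : Set G) (hΛ : Λ = Prod.fst '' ((Γ : Set (G × H)) ∩ Set.univ ×ˢ W₀)) :
    (∃ r > 0, ∀ x ∈ Λ⁻¹ * Λ, ∀ y ∈ Λ⁻¹ * Λ, x ≠ y → r ≤ dist x y) ∧
      IsClosed (Λ⁻¹ * Λ) ∧ DiscreteTopology ↥(Λ⁻¹ * Λ) :=
  modelSet_inv_mul_uniformlyDiscrete_general hleft Γ hdisc hclosed W₀ hW₀ Λ hΛ
end

section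
/- Let G be a compactly generated lcsc group and Λ ⊂ G a uniform approximate lattice. Then the subgroup Λ^∞ generated by Λ is finitely generated; moreover there exists a compact set K ⊂ G generating G such that Λ² ∩ K generates Λ^∞. -/
/-!
The elements of `Λ²` near the identity already generate `Λ^∞`: two points of `Λ` at distance
at most `ρ` differ by an element of `Λ² ∩ B(1, ρ)`, and since `Λ` is `R`-relatively dense, a word
in a compact generating set of `G` can be shadowed by a chain of points of `Λ` whose consecutive
distances are bounded. The generating set `Λ² ∩ B(1, ρ)` is finite because `Λ²` lies in finitely
many translates of the uniformly discrete set `Λ`, each of which meets a compact set finitely.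
-/

open scoped Pointwise
open Filter Topology

def IsUniformlySeparated {X : Type*} [MetricSpace X] (r : ℝ) (S : Set X) : Prop :=
  ∀ x ∈ S, ∀ y ∈ S, x ≠ y → r ≤ dist x y

theorem IsUniformlySeparated.finite_inter_of_isCompact {X : Type*} [MetricSpace X] {r : ℝ}
    {S K : Set X} (hS : IsUniformlySeparated r S) (hr : 0 < r) (hK : IsCompact K) :
    (S ∩ K).Finite := by
  obtain ⟨t, -, ht, hKt⟩ := hK.finite_cover_balls (half_pos hr)
  have hcover : S ∩ K ⊆ ⋃ y ∈ t, S ∩ Metric.ball y (r / 2) := fun x ⟨hxS, hxK⟩ => by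
    obtain ⟨y, hy, hxy⟩ := Set.mem_iUnion₂.mp (hKt hxK)
    exact Set.mem_iUnion₂.mpr ⟨y, hy, hxS, hxy⟩
  refine (ht.biUnion fun y _ => Set.Subsingleton.finite ?_).subset hcover
  intro a ⟨haS, ha⟩ b ⟨hbS, hb⟩
  by_contra hab
  have hclose : dist a b < r := calc
    dist a b ≤ dist a y + dist b y := dist_triangle_right a b y
    _ < r / 2 + r / 2 := add_lt_add ha hb
    _ = r := add_halves r
  exact (hS a haS b hbS hab).not_gt hclose

section LeftInvariantMetric

variable {G : Type*} [Group G] [MetricSpace G]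

theorem IsUniformlySeparated.smul (hleft : ∀ g x y : G, dist (g * x) (g * y) = dist x y)
    {r : ℝ} {S : Set G} (hS : IsUniformlySeparated r S) (g : G) :
    IsUniformlySeparated r (g • S) := by
  rintro _ ⟨x, hx, rfl⟩ _ ⟨y, hy, rfl⟩ hxy
  change r ≤ dist (g * x) (g * y)
  rw [hleft]
  exact hS x hx y hy (ne_of_apply_ne (g • ·) hxy)

theorem finite_mul_inter_of_isCompact (hleft : ∀ g x y : G, dist (g * x) (g * y) = dist x y)
    {r : ℝ} {Λ K : Set G} (hΛ : IsUniformlySeparated r Λ) (hr : 0 < r) {F : Finset G}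
    (hF : Λ * Λ ⊆ (F : Set G) * Λ) (hK : IsCompact K) :
    (Λ * Λ ∩ K).Finite := by
  have hcover : Λ * Λ ∩ K ⊆ ⋃ f ∈ F, f • Λ ∩ K := fun x ⟨hx, hxK⟩ => by
    obtain ⟨f, hf, a, ha, rfl⟩ := hF hx
    exact Set.mem_iUnion₂.mpr ⟨f, hf, ⟨a, ha, rfl⟩, hxK⟩
  exact (F.finite_toSet.biUnion fun f _ =>
    (hΛ.smul hleft f).finite_inter_of_isCompact hr hK).subset hcover

theorem dist_self_mul_eq_dist_one (hleft : ∀ g x y : G, dist (g * x) (g * y) = dist x y) (g c : G) :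
    dist g (g * c) = dist 1 c := by
  simpa using hleft g 1 c

theorem dist_one_inv (hleft : ∀ g x y : G, dist (g * x) (g * y) = dist x y) (c : G) :
    dist 1 c⁻¹ = dist 1 c := by
  simpa [dist_comm] using (hleft c 1 c⁻¹).symm

theorem mem_closure_mul_inter_closedBall_of_dist_le
    (hleft : ∀ g x y : G, dist (g * x) (g * y) = dist x y) {Λ : Set G} (hinv : Λ⁻¹ = Λ)
    {ρ : ℝ} {a b : G} (ha : a ∈ Λ) (hb : b ∈ Λ) (hab : dist a b ≤ ρ)
    (haH : a ∈ Subgroup.closure (Λ * Λ ∩ Metric.closedBall 1 ρ)) :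
    b ∈ Subgroup.closure (Λ * Λ ∩ Metric.closedBall 1 ρ) := by
  have ha' : a⁻¹ ∈ Λ := hinv ▸ Set.inv_mem_inv.mpr ha
  have hstep : a⁻¹ * b ∈ Λ * Λ ∩ Metric.closedBall 1 ρ := by
    refine ⟨Set.mul_mem_mul ha' hb, ?_⟩
    rwa [Metric.mem_closedBall, dist_comm, ← hleft a, mul_one, mul_inv_cancel_left]
  simpa using mul_mem haH (Subgroup.subset_closure hstep)

/-- The bound `2R + s` is one generator step of size `s` plus the two jumps of size `R` between
a word in the generators and its shadow in `Λ`. -/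
theorem subset_closure_mul_inter_closedBall
    (hleft : ∀ g x y : G, dist (g * x) (g * y) = dist x y) {Λ : Set G} (hinv : Λ⁻¹ = Λ)
    (hone : (1 : G) ∈ Λ) {R : ℝ} (hdense : ∀ g : G, ∃ x ∈ Λ, dist g x < R) {s ρ : ℝ}
    (hs : 0 ≤ s) (hgen : Subgroup.closure (Metric.closedBall (1 : G) s) = ⊤)
    (hρ : 2 * R + s ≤ ρ) :
    Λ ⊆ Subgroup.closure (Λ * Λ ∩ Metric.closedBall 1 ρ) := by
  set H := Subgroup.closure (Λ * Λ ∩ Metric.closedBall 1 ρ)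
  have hR : 0 < R := dist_nonneg.trans_lt (hdense 1).choose_spec.2
  let Shadowed : G → Prop := fun g => ∀ a ∈ Λ, dist g a < R → a ∈ H
  have hstep : ∀ g c, dist 1 c ≤ s → Shadowed g → Shadowed (g * c) := by
    intro g c hc hg a ha hga
    obtain ⟨a₀, ha₀, hga₀⟩ := hdense g
    refine mem_closure_mul_inter_closedBall_of_dist_le hleft hinv ha₀ ha ?_ (hg a₀ ha₀ hga₀)
    calc dist a₀ a ≤ dist a₀ g + dist g (g * c) + dist (g * c) a := dist_triangle4 _ _ _ _
      _ ≤ R + s + R := by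
        rw [dist_comm a₀, dist_self_mul_eq_dist_one hleft]
        linarith [hga₀.le, hga.le]
      _ ≤ ρ := by linarith
  have hshadowed : ∀ g, Shadowed g := fun g => by
    induction (hgen ▸ Subgroup.mem_top g : g ∈ Subgroup.closure _)
      using Subgroup.closure_induction_right with
    | one =>
      exact fun a ha h1a => mem_closure_mul_inter_closedBall_of_dist_le hleft hinv hone ha
        (by linarith) (one_mem H)
    | mul_right g _ c hc hg =>
      exact hstep g c (by rwa [dist_comm, ← Metric.mem_closedBall]) hg
    | mul_inv_cancel g _ c hc hg =>
      exact hstep g c⁻¹ (by rwa [dist_one_inv hleft, dist_comm, ← Metric.mem_closedBall]) hg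
  exact fun a ha => hshadowed a a ha (by simpa using hR)

end LeftInvariantMetric

theorem Subgroup.closure_mul_inter_eq_closure {G : Type*} [Group G] {Λ K : Set G}
    (h : Λ ⊆ Subgroup.closure (Λ * Λ ∩ K)) :
    Subgroup.closure (Λ * Λ ∩ K) = Subgroup.closure Λ := by
  refine le_antisymm ((Subgroup.closure_le _).mpr ?_) ((Subgroup.closure_le _).mpr h)
  rintro _ ⟨⟨a, ha, b, hb, rfl⟩, -⟩
  exact mul_mem (Subgroup.subset_closure ha) (Subgroup.subset_closure hb)

theorem uniformApproximateLattice_finitelyGenerated_general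
    {G : Type*} [Group G] [MetricSpace G]
    [ProperSpace G]
    (hleft : ∀ g x y : G, dist (g * x) (g * y) = dist x y)
    (hcg : ∃ C : Set G, IsCompact C ∧ Subgroup.closure C = ⊤)
    (Λ : Set G) (hΛ : IsUniformApproximateLattice Λ) :
    (Subgroup.closure Λ).FG ∧
      ∃ K : Set G, IsCompact K ∧ Subgroup.closure K = ⊤ ∧
        Subgroup.closure (Λ * Λ ∩ K) = Subgroup.closure Λ := by
  obtain ⟨⟨r, hr, hsep⟩, ⟨R, hR, hdense⟩, hinv, hone, F, hF⟩ := hΛ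
  obtain ⟨C, hC, hCgen⟩ := hcg
  obtain ⟨s, hCs⟩ := hC.isBounded.subset_closedBall (1 : G)
  set s' := max s 0
  have hgen : Subgroup.closure (Metric.closedBall (1 : G) s') = ⊤ :=
    top_unique (hCgen ▸ Subgroup.closure_mono
      (hCs.trans (Metric.closedBall_subset_closedBall (le_max_left s 0))))
  set K := Metric.closedBall (1 : G) (2 * R + s')
  have hKgen : Subgroup.closure K = ⊤ := top_unique (hgen ▸ Subgroup.closure_mono
    (Metric.closedBall_subset_closedBall (by linarith)))
  have hclosure : Subgroup.closure (Λ * Λ ∩ K) = Subgroup.closure Λ :=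
    Subgroup.closure_mul_inter_eq_closure
      (subset_closure_mul_inter_closedBall hleft hinv hone hdense (le_max_right s 0) hgen le_rfl)
  have hfinite : (Λ * Λ ∩ K).Finite :=
    finite_mul_inter_of_isCompact hleft hsep hr hF (isCompact_closedBall 1 _)
  exact ⟨(Subgroup.fg_iff _).mpr ⟨_, hclosure, hfinite⟩, K, isCompact_closedBall 1 _, hKgen,
    hclosure⟩

/-- If `G` is a compactly generated lcsc group and `Λ ⊆ G` a uniform
approximate lattice, then the group `Λ^∞` generated by `Λ` is finitely generated;
moreover there is a compact generating set `K` of `G` with `⟨Λ² ∩ K⟩ = ⟨Λ⟩`. -/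
theorem uniformApproximateLattice_finitelyGenerated
    {G : Type*} [Group G] [MetricSpace G] [IsTopologicalGroup G]
    [ProperSpace G] [SecondCountableTopology G]
    (hleft : ∀ g x y : G, dist (g * x) (g * y) = dist x y)
    (hcg : ∃ C : Set G, IsCompact C ∧ Subgroup.closure C = ⊤)
    (Λ : Set G) (hΛ : IsUniformApproximateLattice Λ) :
    (Subgroup.closure Λ).FG ∧
      ∃ K : Set G, IsCompact K ∧ Subgroup.closure K = ⊤ ∧
        Subgroup.closure (Λ * Λ ∩ K) = Subgroup.closure Λ :=
  uniformApproximateLattice_finitelyGenerated_general hleft hcg Λ hΛ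
end

section
/- If a uniform approximate lattice Λ in an lcsc group G generates a finitely generated subgroup Λ^∞, then G is compactly generated. -/
open scoped Pointwise
open Filter Topology

/-! Since `Λ` is `R`-relatively dense and the metric is left invariant, every `g` is `x · (x⁻¹ g)`
with `x ∈ Λ` and `x⁻¹ g` in the closed ball `B(1, R)`. Hence a finite generating set of `Λ^∞`
together with the compact ball `B(1, R)` generates `G`. -/

section LeftInvariantMetric

variable {G : Type*} [Group G] [MetricSpace G]

lemma dist_inv_mul_one_of_left_invariant
    (hleft : ∀ g x y : G, dist (g * x) (g * y) = dist x y) (x g : G) :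
    dist (x⁻¹ * g) 1 = dist g x := by
  simpa using hleft x⁻¹ g x

lemma Subgroup.sup_closure_closedBall_eq_top_of_forall_dist_le
    (hleft : ∀ g x y : G, dist (g * x) (g * y) = dist x y) (H : Subgroup G) {R : ℝ}
    (hH : ∀ g : G, ∃ x ∈ H, dist g x ≤ R) :
    H ⊔ Subgroup.closure (Metric.closedBall 1 R) = ⊤ := by
  refine eq_top_iff.2 fun g _ => ?_
  obtain ⟨x, hxH, hgx⟩ := hH g
  have hx_inv_g : x⁻¹ * g ∈ Subgroup.closure (Metric.closedBall (1 : G) R) :=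
    Subgroup.subset_closure <| by
      rwa [Metric.mem_closedBall, dist_inv_mul_one_of_left_invariant hleft]
  simpa using mul_mem (Subgroup.mem_sup_left hxH) (Subgroup.mem_sup_right hx_inv_g)

end LeftInvariantMetric

theorem compactlyGenerated_of_uniformApproximateLattice_fg_general
    {G : Type*} [Group G] [MetricSpace G]
    [ProperSpace G]
    (hleft : ∀ g x y : G, dist (g * x) (g * y) = dist x y)
    (Λ : Set G) (hΛ : IsUniformApproximateLattice Λ)
    (hfg : (Subgroup.closure Λ).FG) :
    ∃ K : Set G, IsCompact K ∧ Subgroup.closure K = ⊤ := by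
  obtain ⟨-, ⟨R, -, hΛ_dense⟩, -⟩ := hΛ
  obtain ⟨S, hS⟩ := hfg
  refine ⟨S ∪ Metric.closedBall 1 R, S.finite_toSet.isCompact.union (isCompact_closedBall 1 R), ?_⟩
  rw [Subgroup.closure_union, hS]
  refine Subgroup.sup_closure_closedBall_eq_top_of_forall_dist_le hleft _ fun g => ?_
  obtain ⟨x, hxΛ, hgx⟩ := hΛ_dense g
  exact ⟨x, Subgroup.subset_closure hxΛ, hgx.le⟩

/-- If a uniform approximate lattice `Λ` in an lcsc group `G` generates a
finitely generated subgroup `Λ^∞`, then `G` is compactly generated. -/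
theorem compactlyGenerated_of_uniformApproximateLattice_fg
    {G : Type*} [Group G] [MetricSpace G] [IsTopologicalGroup G]
    [ProperSpace G] [SecondCountableTopology G]
    (hleft : ∀ g x y : G, dist (g * x) (g * y) = dist x y)
    (Λ : Set G) (hΛ : IsUniformApproximateLattice Λ)
    (hfg : (Subgroup.closure Λ).FG) :
    ∃ K : Set G, IsCompact K ∧ Subgroup.closure K = ⊤ :=
  compactlyGenerated_of_uniformApproximateLattice_fg_general hleft Λ hΛ hfg
end

section
/- Let G be an lcsc group and Λ ⊂ G a closed subset. Then Λ is relatively dense in G if and only if the empty set does not belong to the right-hull X_Λ, the closure of the orbit {gΛ : g ∈ G} in the Chabauty–Fell space of closed subsets of G. -/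
/-!
A Chabauty–Fell neighbourhood of `∅` contains a basic one `{A | A ∩ K = ∅}` with `K` compact,
so `∅ ∈ X_Λ` says that every compact `K` is missed by some translate `gΛ`. On the other hand
`gΛ` meets `K` exactly when `g⁻¹ ∈ ΛK⁻¹`, so `Λ` is relatively dense iff some compact set is met
by every translate.
-/

open scoped Pointwise
open Filter Topology

/-- The Chabauty–Fell topology on subsets of a topological space `X`. -/
def chabautyFell (X : Type*) [TopologicalSpace X] : TopologicalSpace (Set X) :=
  TopologicalSpace.generateFrom
    ({U | ∃ K : Set X, IsCompact K ∧ U = {A : Set X | A ∩ K = ∅}} ∪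
     {U | ∃ V : Set X, IsOpen V ∧ U = {A : Set X | (A ∩ V).Nonempty}})

/-- The right-hull of `Λ ⊆ G`: the Chabauty–Fell closure of the left-translation orbit
`{gΛ : g ∈ G}`. -/
def rightHull {G : Type*} [Group G] [TopologicalSpace G] (Λ : Set G) : Set (Set G) :=
  @closure (Set G) (chabautyFell G) {A : Set G | ∃ g : G, A = g • Λ}

section ChabautyFell

variable {X : Type*} [TopologicalSpace X]

theorem isOpen_chabautyFell_setOf_inter_eq_empty {K : Set X} (hK : IsCompact K) :
    IsOpen[chabautyFell X] {A : Set X | A ∩ K = ∅} :=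
  .basic _ (.inl ⟨K, hK, rfl⟩)

theorem exists_isCompact_setOf_inter_eq_empty_subset {U : Set (Set X)}
    (hU : IsOpen[chabautyFell X] U) (hempty : ∅ ∈ U) :
    ∃ K : Set X, IsCompact K ∧ {A : Set X | A ∩ K = ∅} ⊆ U := by
  induction hU with
  | basic V hV =>
    rcases hV with ⟨K, hK, rfl⟩ | ⟨W, -, rfl⟩
    · exact ⟨K, hK, subset_rfl⟩
    · simp at hempty
  | univ => exact ⟨∅, isCompact_empty, Set.subset_univ _⟩
  | inter U V _ _ ihU ihV =>
    obtain ⟨K₁, hK₁, h₁⟩ := ihU hempty.1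
    obtain ⟨K₂, hK₂, h₂⟩ := ihV hempty.2
    refine ⟨K₁ ∪ K₂, hK₁.union hK₂, fun A hA => ⟨h₁ ?_, h₂ ?_⟩⟩ <;>
      simp_all [Set.inter_union_distrib_left]
  | sUnion S _ ih =>
    obtain ⟨U, hU, hUempty⟩ := hempty
    obtain ⟨K, hK, hKU⟩ := ih U hU hUempty
    exact ⟨K, hK, hKU.trans (Set.subset_sUnion_of_mem hU)⟩

theorem empty_mem_closure_chabautyFell_iff {S : Set (Set X)} :
    ∅ ∈ closure[chabautyFell X] S ↔ ∀ K : Set X, IsCompact K → ∃ A ∈ S, A ∩ K = ∅ := by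
  rw [@mem_closure_iff _ (chabautyFell X)]
  constructor
  · intro h K hK
    obtain ⟨A, hAK, hAS⟩ := h _ (isOpen_chabautyFell_setOf_inter_eq_empty hK) (Set.empty_inter K)
    exact ⟨A, hAS, hAK⟩
  · intro h U hU hempty
    obtain ⟨K, hK, hKU⟩ := exists_isCompact_setOf_inter_eq_empty_subset hU hempty
    obtain ⟨A, hAS, hAK⟩ := h K hK
    exact ⟨A, hKU hAK, hAS⟩

end ChabautyFell

section RelativelyDense

variable {G : Type*} [Group G]

theorem smul_inter_nonempty_iff_inv_mem_mul_inv {s t : Set G} {g : G} :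
    (g • s ∩ t).Nonempty ↔ g⁻¹ ∈ s * t⁻¹ := by
  rw [Set.smul_inter_nonempty_iff]
  constructor
  · rintro ⟨a, b, ⟨ha, hb⟩, rfl⟩
    exact ⟨b, hb, a⁻¹, by simpa using ha, by group⟩
  · rintro ⟨b, hb, c, hc, hbc⟩
    exact ⟨c⁻¹, b, ⟨hc, hb⟩, by rw [← inv_inj, ← hbc]; group⟩

theorem exists_isCompact_mul_eq_univ_iff [TopologicalSpace G] [ContinuousInv G] {Λ : Set G} :
    (∃ K : Set G, IsCompact K ∧ Λ * K = Set.univ) ↔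
      ∃ K : Set G, IsCompact K ∧ ∀ g : G, (g • Λ ∩ K).Nonempty := by
  simp only [smul_inter_nonempty_iff_inv_mem_mul_inv, Set.eq_univ_iff_forall]
  constructor <;> rintro ⟨K, hK, hcover⟩ <;>
    exact ⟨K⁻¹, hK.inv, fun g => by simpa using hcover g⁻¹⟩

end RelativelyDense

theorem relativelyDense_iff_empty_not_mem_rightHull_general
    {G : Type*} [Group G] [TopologicalSpace G] [IsTopologicalGroup G]
    (Λ : Set G) :
    (∃ K : Set G, IsCompact K ∧ Λ * K = Set.univ) ↔ (∅ : Set G) ∉ rightHull Λ := by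
  rw [exists_isCompact_mul_eq_univ_iff, rightHull, empty_mem_closure_chabautyFell_iff]
  simp [Set.nonempty_iff_ne_empty]

/-- A closed subset `Λ` of an lcsc group `G` is relatively dense iff the
empty set does not belong to the right-hull `X_Λ`. -/
theorem relativelyDense_iff_empty_not_mem_rightHull
    {G : Type*} [Group G] [TopologicalSpace G] [IsTopologicalGroup G]
    [LocallyCompactSpace G] [SecondCountableTopology G] [T2Space G]
    (Λ : Set G) (hΛ : IsClosed Λ) :
    (∃ K : Set G, IsCompact K ∧ Λ * K = Set.univ) ↔ (∅ : Set G) ∉ rightHull Λ :=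
  relativelyDense_iff_empty_not_mem_rightHull_general Λ
end

section
/- Let G be an lcsc group, Λ ⊂ G a closed subset, and P ∈ X_Λ an element of the right-hull of Λ (the Chabauty–Fell orbit closure of Λ under left translations). Then P⁻¹P is contained in the closure of Λ⁻¹Λ. -/
open scoped Pointwise
open Filter Topology

/-!
Any two points `a, b` of a Chabauty–Fell limit `P` are approximated, through the open sets
`{A | A ∩ V ≠ ∅}`, by pairs of points of the approximating sets. Hence for closed `C` the set
`{A | A⁻¹A ⊆ C}` is Chabauty–Fell closed; with `C = closure (Λ⁻¹Λ)` it contains every `gΛ`, since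
`(gΛ)⁻¹(gΛ) = Λ⁻¹Λ`, and therefore the whole right-hull.
-/

theorem isOpen_chabautyFell_setOf_inter_nonempty {X : Type*} [TopologicalSpace X] {V : Set X}
    (hV : IsOpen V) : IsOpen[chabautyFell X] {A : Set X | (A ∩ V).Nonempty} :=
  TopologicalSpace.isOpen_generateFrom_of_mem (Or.inr ⟨V, hV, rfl⟩)

theorem isClosed_chabautyFell_setOf_image2_subset {X Z : Type*} [TopologicalSpace X]
    [TopologicalSpace Z] {f : X → X → Z} (hf : Continuous (Function.uncurry f)) {C : Set Z}
    (hC : IsClosed C) : IsClosed[chabautyFell X] {A : Set X | Set.image2 f A A ⊆ C} := by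
  let := chabautyFell X
  rw [← isOpen_compl_iff, isOpen_iff_forall_mem_open]
  intro A hA
  obtain ⟨_, ⟨a, ha, b, hb, rfl⟩, hab⟩ := Set.not_subset.mp hA
  obtain ⟨U, V, hU, hV, haU, hbV, hUV⟩ :=
    isOpen_prod_iff.mp (hC.isOpen_compl.preimage hf) a b hab
  refine ⟨{B | (B ∩ U).Nonempty} ∩ {B | (B ∩ V).Nonempty}, ?_,
    (isOpen_chabautyFell_setOf_inter_nonempty hU).inter
      (isOpen_chabautyFell_setOf_inter_nonempty hV), ⟨a, ha, haU⟩, ⟨b, hb, hbV⟩⟩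
  rintro B ⟨⟨a', ha'B, ha'U⟩, ⟨b', hb'B, hb'V⟩⟩ hB
  exact hUV (Set.mk_mem_prod ha'U hb'V) (hB (Set.mem_image2_of_mem ha'B hb'B))

theorem isClosed_chabautyFell_setOf_inv_mul_subset {G : Type*} [Group G] [TopologicalSpace G]
    [IsTopologicalGroup G] {C : Set G} (hC : IsClosed C) :
    IsClosed[chabautyFell G] {A : Set G | A⁻¹ * A ⊆ C} := by
  have hA (A : Set G) : A⁻¹ * A = Set.image2 (fun a b => a⁻¹ * b) A A := by
    rw [← Set.image2_mul, ← Set.image_inv_eq_inv, Set.image2_image_left]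
  simp only [hA]
  exact isClosed_chabautyFell_setOf_image2_subset (by fun_prop) hC

theorem Set.inv_mul_smul_set_self {G : Type*} [Group G] (g : G) (s : Set G) :
    (g • s)⁻¹ * (g • s) = s⁻¹ * s := by
  rw [Set.inv_smul_set_distrib, Set.op_smul_set_mul_eq_mul_smul_set, inv_smul_smul]

theorem rightHull_inv_mul_subset_closure_general
    {G : Type*} [Group G] [TopologicalSpace G] [IsTopologicalGroup G]
    (Λ : Set G) (P : Set G) (hP : P ∈ rightHull Λ) :
    P⁻¹ * P ⊆ closure (Λ⁻¹ * Λ) := by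
  let := chabautyFell G
  have horbit : {A : Set G | ∃ g : G, A = g • Λ} ⊆ {A | A⁻¹ * A ⊆ closure (Λ⁻¹ * Λ)} := by
    rintro _ ⟨g, rfl⟩
    rw [Set.mem_ofPred_eq, Set.inv_mul_smul_set_self]
    exact subset_closure
  exact closure_minimal horbit (isClosed_chabautyFell_setOf_inv_mul_subset isClosed_closure) hP

/-- For a closed subset `Λ` of an lcsc group `G` and `P ∈ X_Λ`,
one has `P⁻¹P ⊆ closure (Λ⁻¹Λ)`. -/
theorem rightHull_inv_mul_subset_closure
    {G : Type*} [Group G] [TopologicalSpace G] [IsTopologicalGroup G]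
    [LocallyCompactSpace G] [SecondCountableTopology G] [T2Space G]
    (Λ : Set G) (hΛ : IsClosed Λ) (P : Set G) (hP : P ∈ rightHull Λ) :
    P⁻¹ * P ⊆ closure (Λ⁻¹ * Λ) :=
  rightHull_inv_mul_subset_closure_general Λ P hP
end

section
/- Let Λ ⊂ G be a subset of finite local complexity (Λ⁻¹Λ closed and discrete) in an lcsc group G. Then there exists an open set U ⊂ G such that |P ∩ gU| ≤ 1 for all P in the right-hull X_Λ and all g ∈ G. In particular, for every compact K ⊂ G there is a constant C_K with |P ∩ K| < C_K for all P ∈ X_Λ. -/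
/-!
Since `Λ⁻¹Λ` is discrete and contains `1` (unless `Λ = ∅`), some neighbourhood `V` of `1` meets
it only in `1`. Choosing an open `U ∋ 1` with `U⁻¹U ⊆ V`, two points `hl₁, hl₂` of a translate
`hΛ` lying in one `gU` satisfy `l₁⁻¹l₂ ∈ Λ⁻¹Λ ∩ U⁻¹U`, so they coincide. Having two points in an
open set `O` is a Chabauty–Fell open condition (separate the points by disjoint open sets), so
`|P ∩ gU| ≤ 1` passes to the closure of the orbit. A compact `K` is covered by finitely many
translates `kU`, which bounds `|P ∩ K|` uniformly.
-/

open scoped Pointwise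
open Filter Topology

open Set

theorem exists_mem_nhds_inter_subset_singleton {X : Type*} [TopologicalSpace X] {S : Set X}
    [DiscreteTopology S] {x : X} (hx : x ∈ S) : ∃ V ∈ 𝓝 x, V ∩ S ⊆ {x} := by
  have hS : Sᶜ ∈ 𝓝[≠] x :=
    inf_principal_eq_bot.1 (discreteTopology_subtype_iff.1 ‹DiscreteTopology S› x hx)
  obtain ⟨V, hV, hxV, hVS⟩ := mem_nhdsWithin.1 hS
  exact ⟨V, hV.mem_nhds hxV, fun y ⟨hyV, hyS⟩ => by_contra fun hyx => hVS ⟨hyV, hyx⟩ hyS⟩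

section TopologicalGroup

variable {G : Type*} [Group G] [TopologicalSpace G] [IsTopologicalGroup G]

theorem exists_open_nhds_one_inv_mul_subset {V : Set G} (hV : V ∈ 𝓝 (1 : G)) :
    ∃ U : Set G, IsOpen U ∧ (1 : G) ∈ U ∧ U⁻¹ * U ⊆ V := by
  have hmap : (fun p : G × G => p.1⁻¹ * p.2) ⁻¹' V ∈ 𝓝 ((1, 1) : G × G) :=
    (continuousAt_fst.inv.mul continuousAt_snd) (by simpa using hV)
  obtain ⟨U, hU, h1U, hUU⟩ := exists_nhds_square hmap
  refine ⟨U, hU, h1U, ?_⟩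
  rintro _ ⟨u₁, hu₁, u₂, hu₂, rfl⟩
  simpa using hUU (mk_mem_prod (mem_inv.1 hu₁) hu₂)

theorem exists_open_smul_inter_smul_subsingleton {Λ : Set G}
    [DiscreteTopology ↥(Λ⁻¹ * Λ)] :
    ∃ U : Set G, IsOpen U ∧ (1 : G) ∈ U ∧ ∀ h g : G, (h • Λ ∩ g • U).Subsingleton := by
  obtain ⟨V, hV, hVΛ⟩ : ∃ V ∈ 𝓝 (1 : G), V ∩ (Λ⁻¹ * Λ) ⊆ {1} := by
    rcases Λ.eq_empty_or_nonempty with rfl | ⟨l, hl⟩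
    · exact ⟨univ, univ_mem, by simp⟩
    · exact exists_mem_nhds_inter_subset_singleton ⟨l⁻¹, inv_mem_inv.2 hl, l, hl, inv_mul_cancel l⟩
  obtain ⟨U, hU, h1U, hUV⟩ := exists_open_nhds_one_inv_mul_subset hV
  refine ⟨U, hU, h1U, fun h g => ?_⟩
  rintro _ ⟨⟨l₁, hl₁, rfl⟩, u₁, hu₁, hgu₁⟩ _ ⟨⟨l₂, hl₂, rfl⟩, u₂, hu₂, hgu₂⟩
  have hΛ : (h * l₁)⁻¹ * (h * l₂) ∈ Λ⁻¹ * Λ := by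
    rw [mul_inv_rev, mul_assoc, inv_mul_cancel_left]
    exact mul_mem_mul (inv_mem_inv.2 hl₁) hl₂
  have hV : (h * l₁)⁻¹ * (h * l₂) ∈ V := by
    simp only [smul_eq_mul] at hgu₁ hgu₂
    rw [← hgu₁, ← hgu₂, mul_inv_rev, mul_assoc, inv_mul_cancel_left]
    exact hUV (mul_mem_mul (inv_mem_inv.2 hu₁) hu₂)
  exact inv_mul_eq_one.1 (hVΛ ⟨hV, hΛ⟩)

end TopologicalGroup

section ChabautyFell

variable {X : Type*} [TopologicalSpace X]

theorem isOpen_setOf_inter_nonempty_chabautyFell {V : Set X} (hV : IsOpen V) :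
    IsOpen[chabautyFell X] {A : Set X | (A ∩ V).Nonempty} :=
  TopologicalSpace.isOpen_generateFrom_of_mem (Or.inr ⟨V, hV, rfl⟩)

theorem isClosed_setOf_inter_subsingleton_chabautyFell [T2Space X] {O : Set X} (hO : IsOpen O) :
    IsClosed[chabautyFell X] {A : Set X | (A ∩ O).Subsingleton} := by
  let := chabautyFell X
  refine isOpen_compl_iff.1 (isOpen_iff_forall_mem_open.2 fun A hA => ?_)
  obtain ⟨x, hx, y, hy, hxy⟩ := not_subsingleton_iff.1 hA
  obtain ⟨O₁, O₂, hO₁, hO₂, hxO₁, hyO₂, hdisj⟩ := t2_separation hxy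
  refine ⟨{B | (B ∩ (O₁ ∩ O)).Nonempty} ∩ {B | (B ∩ (O₂ ∩ O)).Nonempty}, ?_,
    (isOpen_setOf_inter_nonempty_chabautyFell (hO₁.inter hO)).inter
      (isOpen_setOf_inter_nonempty_chabautyFell (hO₂.inter hO)),
    ⟨x, hx.1, hxO₁, hx.2⟩, ⟨y, hy.1, hyO₂, hy.2⟩⟩
  rintro B ⟨⟨a, haB, haO₁, haO⟩, ⟨b, hbB, hbO₂, hbO⟩⟩ hB
  exact disjoint_left.1 hdisj haO₁ (hB ⟨haB, haO⟩ ⟨hbB, hbO⟩ ▸ hbO₂)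

theorem rightHull_subset_of_isClosed {G : Type*} [Group G] [TopologicalSpace G] {Λ : Set G}
    {𝒞 : Set (Set G)} (h𝒞 : IsClosed[chabautyFell G] 𝒞) (hΛ : ∀ g : G, g • Λ ∈ 𝒞) :
    rightHull Λ ⊆ 𝒞 :=
  @closure_minimal _ (chabautyFell G) _ _ (by rintro _ ⟨g, rfl⟩; exact hΛ g) h𝒞

end ChabautyFell

theorem exists_ncard_lt_of_forall_inter_smul_subsingleton {G : Type*} [Group G]
    [TopologicalSpace G] [ContinuousConstSMul G G] {U K : Set G} (hU : IsOpen U)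
    (h1U : (1 : G) ∈ U) (hK : IsCompact K) :
    ∃ C : ℕ, ∀ P : Set G, (∀ g : G, (P ∩ g • U).Subsingleton) →
      (P ∩ K).Finite ∧ (P ∩ K).ncard < C := by
  obtain ⟨t, -, hKt⟩ := hK.elim_nhds_subcover (fun k => k • U)
    fun k _ => (hU.smul k).mem_nhds ⟨1, h1U, mul_one k⟩
  refine ⟨t.card + 1, fun P hP => ?_⟩
  have hPK : P ∩ K ⊆ ⋃ k ∈ t, P ∩ k • U := by
    rw [← inter_iUnion₂]
    exact inter_subset_inter_right P hKt
  have hfin : (⋃ k ∈ t, P ∩ k • U).Finite := t.finite_toSet.biUnion fun k _ => (hP k).finite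
  refine ⟨hfin.subset hPK, Nat.lt_succ_of_le ?_⟩
  calc (P ∩ K).ncard ≤ (⋃ k ∈ t, P ∩ k • U).ncard := ncard_le_ncard hPK hfin
    _ ≤ ∑ k ∈ t, (P ∩ k • U).ncard := t.set_ncard_biUnion_le _
    _ ≤ t.card := by
      simpa using t.sum_le_card_nsmul _ 1 fun k _ => (ncard_le_one (hP k).finite).2 (hP k)

theorem rightHull_uniformly_locally_finite_of_flc_general
    {G : Type*} [Group G] [TopologicalSpace G] [IsTopologicalGroup G]
    [T2Space G]
    (Λ : Set G) (hdisc : DiscreteTopology ↥(Λ⁻¹ * Λ)) :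
    (∃ U : Set G, IsOpen U ∧ U.Nonempty ∧
        ∀ P ∈ rightHull Λ, ∀ g : G, (P ∩ g • U).Subsingleton) ∧
      ∀ K : Set G, IsCompact K →
        ∃ C : ℕ, ∀ P ∈ rightHull Λ, (P ∩ K).Finite ∧ (P ∩ K).ncard < C := by
  obtain ⟨U, hU, h1U, hΛU⟩ := exists_open_smul_inter_smul_subsingleton (Λ := Λ)
  have hHull : ∀ P ∈ rightHull Λ, ∀ g : G, (P ∩ g • U).Subsingleton := fun P hP g =>
    rightHull_subset_of_isClosed (isClosed_setOf_inter_subsingleton_chabautyFell (hU.smul g))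
      (fun h => hΛU h g) hP
  refine ⟨⟨U, hU, ⟨1, h1U⟩, hHull⟩, fun K hK => ?_⟩
  obtain ⟨C, hC⟩ := exists_ncard_lt_of_forall_inter_smul_subsingleton hU h1U hK
  exact ⟨C, fun P hP => hC P (hHull P hP)⟩

/-- If `Λ ⊆ G` has finite local complexity (`Λ⁻¹Λ` closed and discrete),
then there is a (nonempty) open `U ⊆ G` with `|P ∩ gU| ≤ 1` for all `P ∈ X_Λ`, `g ∈ G`;
in particular, for every compact `K` there is `C_K` with `|P ∩ K| < C_K` for all
`P ∈ X_Λ`. -/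
theorem rightHull_uniformly_locally_finite_of_flc
    {G : Type*} [Group G] [TopologicalSpace G] [IsTopologicalGroup G]
    [LocallyCompactSpace G] [SecondCountableTopology G] [T2Space G]
    (Λ : Set G) (hclosed : IsClosed (Λ⁻¹ * Λ)) (hdisc : DiscreteTopology ↥(Λ⁻¹ * Λ)) :
    (∃ U : Set G, IsOpen U ∧ U.Nonempty ∧
        ∀ P ∈ rightHull Λ, ∀ g : G, (P ∩ g • U).Subsingleton) ∧
      ∀ K : Set G, IsCompact K →
        ∃ C : ℕ, ∀ P ∈ rightHull Λ, (P ∩ K).Finite ∧ (P ∩ K).ncard < C :=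
  rightHull_uniformly_locally_finite_of_flc_general Λ hdisc
end

section
/- Let G be an lcsc group with Haar measure, Λ ⊂ G a closed subset such that the right-hull X_Λ carries a G-invariant Borel probability measure ν with ν({∅}) = 0. Then for every ε > 0 there exists a finite set F ⊂ G such that G = F·B_ε(e)·Λ⁻¹Λ·B_ε(e). In particular Λ⁻¹Λ is bi-syndetic. -/
open scoped Pointwise
open Filter Topology MeasureTheory

/-- The Borel σ-algebra of the Chabauty–Fell topology. -/
def hullMS (X : Type*) [TopologicalSpace X] : MeasurableSpace (Set X) :=
  @borel (Set X) (chabautyFell X)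

/-! Hit sets `{A | (A ∩ W).Nonempty}` of open `W` are Chabauty–Fell open, and invariance of `ν`
gives all hit sets of translates `g • V` the same measure `c`. This is positive: countably many
translates of `V` cover `G`, and `ν`-almost every point of the hull is nonempty. A family of
translates whose hit sets meet pairwise in `ν`-null sets has at most `1 / c` members, so a maximal
one `F` exists; for every `g` the open set `hit(f • V) ∩ hit(g • V)` is then non-null for some
`f ∈ F`, and since `ν` lives on the hull it contains a translate `k • Λ`. As `k • Λ` meets both
`f • V` and `g • V`, we get `g ∈ f V Λ⁻¹ Λ V⁻¹`. -/

open scoped ENNReal Function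

theorem Dense.biUnion_smul_eq_univ {G : Type*} [Group G] [TopologicalSpace G]
    [IsTopologicalGroup G] {D V : Set G} (hD : Dense D) (hV : IsOpen V) (hVne : V.Nonempty) :
    ⋃ g ∈ D, g • V = Set.univ := by
  refine Set.eq_univ_of_forall fun x => ?_
  obtain ⟨v, hv⟩ := hVne
  obtain ⟨g, hgD, w, hw, hgw⟩ :=
    hD.exists_mem_open (hV.inv.smul x) ⟨x * v⁻¹, Set.smul_mem_smul_set (Set.inv_mem_inv.2 hv)⟩
  refine Set.mem_biUnion hgD ⟨w⁻¹, Set.mem_inv.1 hw, ?_⟩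
  subst hgw
  exact mul_inv_cancel_right x w

theorem MeasureTheory.exists_finset_forall_measure_inter_ne_zero {α ι : Type*}
    [MeasurableSpace α] (μ : Measure α) [IsFiniteMeasure μ] {s : ι → Set α}
    (hs : ∀ i, NullMeasurableSet (s i) μ) {c : ℝ≥0∞} (hc : c ≠ 0) (hsc : ∀ i, c ≤ μ (s i)) :
    ∃ F : Finset ι, ∀ i, ∃ j ∈ F, μ (s j ∩ s i) ≠ 0 := by
  have hcard : ∀ F : Finset ι, (F : Set ι).Pairwise (AEDisjoint μ on s) → F.card * c ≤ μ .univ :=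
    fun F hF => calc
      F.card * c ≤ ∑ i ∈ F, μ (s i) := by
        rw [← nsmul_eq_mul]; exact F.card_nsmul_le_sum _ _ fun i _ => hsc i
      _ = μ (⋃ i ∈ F, s i) := (measure_biUnion_finset₀ hF fun i _ => hs i).symm
      _ ≤ μ .univ := measure_mono (Set.subset_univ _)
  classical
  -- otherwise greedily adding sets produces almost disjoint families of every size
  by_contra! hmax
  have hgrow : ∀ n : ℕ, ∃ F : Finset ι, (F : Set ι).Pairwise (AEDisjoint μ on s) ∧ F.card = n := by
    intro n
    induction n with
    | zero => exact ⟨∅, by simp, rfl⟩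
    | succ n ih =>
      obtain ⟨F, hF, rfl⟩ := ih
      obtain ⟨i, hi⟩ := hmax F
      have hiF : i ∉ F := fun h => hc (le_zero_iff.1 ((hsc i).trans_eq (by simpa using hi i h)))
      refine ⟨insert i F, ?_, Finset.card_insert_of_notMem hiF⟩
      rw [Finset.coe_insert, Set.pairwise_insert]
      exact ⟨hF, fun j hj _ => ⟨AEDisjoint.symm (hi j hj), hi j hj⟩⟩
  obtain ⟨n, hn⟩ := ENNReal.exists_nat_mul_gt hc (measure_ne_top μ .univ)
  obtain ⟨F, hF, rfl⟩ := hgrow n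
  exact hn.not_ge (hcard F hF)

theorem IsOpen.inter_nonempty_of_measure_compl_closure_eq_zero {α : Type*} [TopologicalSpace α]
    [MeasurableSpace α] {μ : Measure α} {S T : Set α} (hS : IsOpen S) (hSμ : μ S ≠ 0)
    (hT : μ (closure T)ᶜ = 0) : (S ∩ T).Nonempty := by
  by_contra hST
  have hdisj : Disjoint S (closure T) :=
    (Set.disjoint_iff_inter_eq_empty.2 (Set.not_nonempty_iff_eq_empty.1 hST)).closure_right hS
  exact hSμ (measure_mono_null hdisj.subset_compl_right hT)

theorem inv_mul_mem_mul_inv_mul_mul_inv {G : Type*} [Group G] {Λ V : Set G} {k f g : G}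
    (hf : (k • Λ ∩ f • V).Nonempty) (hg : (k • Λ ∩ g • V).Nonempty) :
    f⁻¹ * g ∈ V * (Λ⁻¹ * Λ) * V⁻¹ := by
  obtain ⟨_, ⟨l₁, hl₁, rfl⟩, v₁, hv₁, h₁⟩ := hf
  obtain ⟨_, ⟨l₂, hl₂, rfl⟩, v₂, hv₂, h₂⟩ := hg
  have hk : k = f * v₁ * l₁⁻¹ := eq_mul_inv_iff_mul_eq.2 h₁.symm
  have hg : g = k * l₂ * v₂⁻¹ := eq_mul_inv_iff_mul_eq.2 h₂
  have hfg : f⁻¹ * g = v₁ * (l₁⁻¹ * l₂) * v₂⁻¹ := by rw [hg, hk]; group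
  rw [hfg]
  exact Set.mul_mem_mul (Set.mul_mem_mul hv₁ (Set.mul_mem_mul (Set.inv_mem_inv.2 hl₁) hl₂))
    (Set.inv_mem_inv.2 hv₂)

namespace ChabautyFell

attribute [local instance] chabautyFell

def hitting {X : Type*} (W : Set X) : Set (Set X) := {A | (A ∩ W).Nonempty}

theorem preimage_smul_hitting {X G : Type*} [Group G] [MulAction G X] (g : G) (W : Set X) :
    (fun A : Set X => g • A) ⁻¹' hitting W = hitting (g⁻¹ • W) := by
  ext A
  simp only [hitting, Set.mem_preimage, Set.mem_ofPred_eq]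
  rw [← Set.smul_set_nonempty (a := g) (s := A ∩ _), Set.smul_set_inter, smul_inv_smul]

section

variable {X : Type*} [TopologicalSpace X]

theorem isOpen_hitting {W : Set X} (hW : IsOpen W) : IsOpen (hitting W) :=
  TopologicalSpace.isOpen_generateFrom_of_mem (Or.inr ⟨W, hW, rfl⟩)

theorem isOpen_compl_hitting {K : Set X} (hK : IsCompact K) : IsOpen (hitting K)ᶜ := by
  refine TopologicalSpace.isOpen_generateFrom_of_mem (Or.inl ⟨K, hK, ?_⟩)
  ext A
  exact Set.not_nonempty_iff_eq_empty

theorem continuous_smul_set {G : Type*} [Group G] [MulAction G X] [ContinuousConstSMul G X]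
    (g : G) : Continuous (fun A : Set X => g • A) := by
  refine continuous_generateFrom_iff.mpr ?_
  rintro _ (⟨K, hK, rfl⟩ | ⟨W, hW, rfl⟩)
  · have hmiss : {A : Set X | A ∩ K = ∅} = (hitting K)ᶜ := by
      ext A
      exact Set.not_nonempty_iff_eq_empty.symm
    rw [hmiss, Set.preimage_compl, preimage_smul_hitting]
    exact isOpen_compl_hitting (hK.smul _)
  · rw [← hitting, preimage_smul_hitting]
    exact isOpen_hitting (hW.smul _)

variable [MeasurableSpace (Set X)] [BorelSpace (Set X)] {ν : Measure (Set X)}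

theorem measure_hitting_smul {G : Type*} [Group G] [MulAction G X] [ContinuousConstSMul G X]
    (hinv : ∀ g : G, ν.map (fun A : Set X => g • A) = ν) (g : G) {W : Set X} (hW : IsOpen W) :
    ν (hitting (g • W)) = ν (hitting W) := by
  have hpres : MeasurePreserving (fun A : Set X => g⁻¹ • A) ν ν :=
    ⟨(continuous_smul_set g⁻¹).measurable, hinv g⁻¹⟩
  rw [← hpres.measure_preimage (isOpen_hitting hW).measurableSet.nullMeasurableSet,
    preimage_smul_hitting, inv_inv]

end

section

variable {G : Type*} [Group G] [TopologicalSpace G] [IsTopologicalGroup G]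
  [TopologicalSpace.SeparableSpace G] [MeasurableSpace (Set G)] [BorelSpace (Set G)]
  {ν : Measure (Set G)}

theorem measure_hitting_ne_zero
    (hinv : ∀ g : G, ν.map (fun A : Set G => g • A) = ν) (hne : ν {∅}ᶜ ≠ 0) {V : Set G}
    (hV : IsOpen V) (hVne : V.Nonempty) : ν (hitting V) ≠ 0 := by
  obtain ⟨D, hDc, hD⟩ := TopologicalSpace.exists_countable_dense G
  have hcover : {∅}ᶜ ⊆ ⋃ g ∈ D, hitting (g • V) := by
    intro A hA
    obtain ⟨x, hx⟩ := Set.nonempty_iff_ne_empty.2 hA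
    have hxD : x ∈ ⋃ g ∈ D, g • V := (hD.biUnion_smul_eq_univ hV hVne).symm ▸ Set.mem_univ x
    obtain ⟨g, hgD, hxg⟩ := Set.mem_iUnion₂.1 hxD
    exact Set.mem_biUnion hgD ⟨x, hx, hxg⟩
  intro h0
  refine hne (measure_mono_null hcover ((measure_biUnion_null_iff hDc).2 fun g _ => ?_))
  rw [measure_hitting_smul hinv g hV, h0]

theorem exists_finset_mul_mul_inv_mul_mul_inv_eq_univ [IsFiniteMeasure ν]
    (hinv : ∀ g : G, ν.map (fun A : Set G => g • A) = ν) (hne : ν {∅}ᶜ ≠ 0) {Λ : Set G}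
    (hhull : ν (rightHull Λ)ᶜ = 0) {V : Set G} (hV : IsOpen V) (hVne : V.Nonempty) :
    ∃ F : Finset G, (F : Set G) * V * (Λ⁻¹ * Λ) * V⁻¹ = Set.univ := by
  obtain ⟨F, hF⟩ := exists_finset_forall_measure_inter_ne_zero ν
    (fun g => (isOpen_hitting (hV.smul g)).measurableSet.nullMeasurableSet)
    (measure_hitting_ne_zero hinv hne hV hVne) (fun g => (measure_hitting_smul hinv g hV).ge)
  refine ⟨F, Set.eq_univ_of_forall fun g => ?_⟩
  obtain ⟨f, hfF, hfg⟩ := hF g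
  obtain ⟨_, ⟨hf, hg⟩, k, rfl⟩ := ((isOpen_hitting (hV.smul f)).inter
    (isOpen_hitting (hV.smul g))).inter_nonempty_of_measure_compl_closure_eq_zero hfg hhull
  have hmem := Set.mul_mem_mul hfF (inv_mul_mem_mul_inv_mul_mul_inv hf hg)
  rw [mul_inv_cancel_left] at hmem
  simpa only [mul_assoc] using hmem

end

end ChabautyFell

theorem bi_syndetic_of_invariant_measure_on_hull_general
    {G : Type*} [Group G] [MetricSpace G] [IsTopologicalGroup G]
    [ProperSpace G] [SecondCountableTopology G]
    (Λ : Set G)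
    (ν : @Measure (Set G) (hullMS G))
    (hprob : ν Set.univ = 1) (hsupp : ν (rightHull Λ) = 1)
    (hinv : ∀ g : G,
      @Measure.map (Set G) (Set G) (hullMS G) (hullMS G) (fun A => g • A) ν = ν)
    (hempty : ν {(∅ : Set G)} = 0) :
    (∀ ε > (0 : ℝ), ∃ F : Finset G,
        (F : Set G) * Metric.ball (1 : G) ε * (Λ⁻¹ * Λ) * Metric.ball (1 : G) ε =
          Set.univ) ∧
      ∃ K L : Set G, IsCompact K ∧ IsCompact L ∧ K * (Λ⁻¹ * Λ) * L = Set.univ := by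
  let _ : TopologicalSpace (Set G) := chabautyFell G
  let _ : MeasurableSpace (Set G) := hullMS G
  have : BorelSpace (Set G) := ⟨rfl⟩
  have : IsProbabilityMeasure ν := ⟨hprob⟩
  have hne : ν {∅}ᶜ ≠ 0 := fun h => by
    simpa [hempty, h] using measure_univ_le_add_compl (μ := ν) {∅}
  have hhull : ν (rightHull Λ)ᶜ = 0 :=
    (prob_compl_eq_zero_iff isClosed_closure.measurableSet).2 hsupp
  have hcover (ε : ℝ) (hε : 0 < ε) : ∃ F : Finset G,
      (F : Set G) * Metric.ball 1 ε * (Λ⁻¹ * Λ) * Metric.ball 1 ε = Set.univ := by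
    -- the ball need not be symmetric
    set B := Metric.ball (1 : G) ε
    obtain ⟨F, hF⟩ := ChabautyFell.exists_finset_mul_mul_inv_mul_mul_inv_eq_univ hinv hne hhull
      (V := B ∩ B⁻¹) (Metric.isOpen_ball.inter Metric.isOpen_ball.inv)
      ⟨1, Metric.mem_ball_self hε, by simpa [B] using Metric.mem_ball_self (x := (1 : G)) hε⟩
    refine ⟨F, Set.univ_subset_iff.1 (hF ▸ ?_)⟩
    gcongr
    · exact Set.inter_subset_left
    · exact Set.inv_subset.2 Set.inter_subset_right
  obtain ⟨F, hF⟩ := hcover 1 one_pos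
  refine ⟨hcover, (F : Set G) * Metric.closedBall 1 1, Metric.closedBall 1 1,
    F.finite_toSet.isCompact.mul (isCompact_closedBall _ _), isCompact_closedBall _ _,
    Set.univ_subset_iff.1 (hF ▸ ?_)⟩
  gcongr <;> exact Metric.ball_subset_closedBall

/-- If the right-hull of a closed subset `Λ` of an lcsc group `G` carries a
`G`-invariant Borel probability measure `ν` with `ν({∅}) = 0`, then for every `ε > 0`
there is a finite `F ⊆ G` with `G = F ⬝ B_ε(e) ⬝ Λ⁻¹Λ ⬝ B_ε(e)`; in particular `Λ⁻¹Λ`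
is bi-syndetic. -/
theorem bi_syndetic_of_invariant_measure_on_hull
    {G : Type*} [Group G] [MetricSpace G] [IsTopologicalGroup G]
    [ProperSpace G] [SecondCountableTopology G]
    (hleft : ∀ g x y : G, dist (g * x) (g * y) = dist x y)
    (Λ : Set G) (hΛ : IsClosed Λ)
    (ν : @Measure (Set G) (hullMS G))
    (hprob : ν Set.univ = 1) (hsupp : ν (rightHull Λ) = 1)
    (hinv : ∀ g : G,
      @Measure.map (Set G) (Set G) (hullMS G) (hullMS G) (fun A => g • A) ν = ν)
    (hempty : ν {(∅ : Set G)} = 0) :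
    (∀ ε > (0 : ℝ), ∃ F : Finset G,
        (F : Set G) * Metric.ball (1 : G) ε * (Λ⁻¹ * Λ) * Metric.ball (1 : G) ε =
          Set.univ) ∧
      ∃ K L : Set G, IsCompact K ∧ IsCompact L ∧ K * (Λ⁻¹ * Λ) * L = Set.univ :=
  bi_syndetic_of_invariant_measure_on_hull_general Λ ν hprob hsupp hinv hempty
end

section
/- If G is a discrete group and Λ ⊂ G is a subset whose right-hull X_Λ (in the space of subsets of G with product topology) carries a non-trivial G-invariant probability measure (giving zero mass to the empty set), then Λ⁻¹Λ is right-syndetic: there is a finite set F ⊂ G with Λ⁻¹Λ·F = G. -/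
open scoped Pointwise
open Filter Topology MeasureTheory

/-!
If `Λ⁻¹Λ` were not right-syndetic, one could choose `u₀, u₁, …` with `uⱼ uᵢ⁻¹ ∉ Λ⁻¹Λ` for
`i < j`. No set `A` in the hull contains two of the points `uᵢ⁻¹`, since any two points of
a translate `gΛ`, hence of any `A` in its closure, differ by an element of `Λ⁻¹Λ`. So the
events `{A | uᵢ⁻¹ ∈ A}` are almost surely disjoint, and by invariance they all have the
measure of `{A | 1 ∈ A}`, which is positive because `ν` does not charge `∅` and `G` is
countable. Infinitely many disjoint events of equal positive mass contradict `ν univ = 1`.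
-/

theorem exists_seq_mul_inv_notMem_of_forall_mul_ne_univ {G : Type*} [Group G] {D : Set G}
    (hD : ∀ F : Finset G, D * (F : Set G) ≠ Set.univ) :
    ∃ u : ℕ → G, ∀ i j, i < j → u j * (u i)⁻¹ ∉ D := by
  obtain ⟨u, -, hu⟩ := exists_seq_of_forall_finset_exists (fun _ : G => True)
    (fun x y => y * x⁻¹ ∉ D) fun F _ => by
      obtain ⟨y, hy⟩ := (Set.ne_univ_iff_exists_notMem _).mp (hD F)
      exact ⟨y, trivial, fun x hx hyx => hy ⟨_, hyx, x, hx, inv_mul_cancel_right y x⟩⟩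
  exact ⟨u, hu⟩

section ChabautyFell

variable {G : Type*} [TopologicalSpace G]

theorem chabautyFell_isOpen_setOf_mem [DiscreteTopology G] (g : G) :
    IsOpen[chabautyFell G] {A : Set G | g ∈ A} := by
  refine TopologicalSpace.GenerateOpen.basic _ (Or.inr ⟨{g}, isOpen_discrete _, ?_⟩)
  ext A
  simp [Set.Nonempty]

theorem chabautyFell_continuous_smul [Group G] [ContinuousConstSMul G G] (g : G) :
    Continuous[chabautyFell G, chabautyFell G] (g • · : Set G → Set G) := by
  let _ := chabautyFell G
  have smul_inter (A K : Set G) : g • A ∩ K = g • (A ∩ g⁻¹ • K) := by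
    rw [Set.smul_set_inter, smul_inv_smul]
  refine continuous_generateFrom_iff.mpr ?_
  rintro s (⟨K, hK, rfl⟩ | ⟨V, hV, rfl⟩)
  · have hpre : (g • ·) ⁻¹' {A : Set G | A ∩ K = ∅} = {A | A ∩ g⁻¹ • K = ∅} := by
      ext A
      simp only [Set.mem_preimage, Set.mem_ofPred_eq, smul_inter, Set.smul_set_eq_empty]
    exact hpre ▸ TopologicalSpace.isOpen_generateFrom_of_mem (Or.inl ⟨_, hK.smul g⁻¹, rfl⟩)
  · have hpre : (g • ·) ⁻¹' {A : Set G | (A ∩ V).Nonempty} = {A | (A ∩ g⁻¹ • V).Nonempty} := by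
      ext A
      simp only [Set.mem_preimage, Set.mem_ofPred_eq, smul_inter, Set.smul_set_nonempty]
    exact hpre ▸ TopologicalSpace.isOpen_generateFrom_of_mem (Or.inr ⟨_, hV.smul g⁻¹, rfl⟩)

variable [Group G] [DiscreteTopology G]

theorem inv_mul_mem_of_mem_rightHull {Λ A : Set G} (hA : A ∈ rightHull Λ) {x y : G}
    (hx : x ∈ A) (hy : y ∈ A) : x⁻¹ * y ∈ Λ⁻¹ * Λ := by
  let _ := chabautyFell G
  obtain ⟨_, ⟨hxB, hyB⟩, k, rfl⟩ := mem_closure_iff.mp hA _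
    ((chabautyFell_isOpen_setOf_mem x).inter (chabautyFell_isOpen_setOf_mem y)) ⟨hx, hy⟩
  obtain ⟨a, ha, rfl⟩ := hxB
  obtain ⟨b, hb, rfl⟩ := hyB
  refine ⟨a⁻¹, Set.inv_mem_inv.mpr ha, b, hb, ?_⟩
  simp only [smul_eq_mul, mul_inv_rev, mul_assoc, inv_mul_cancel_left]

end ChabautyFell

section InvariantMeasure

variable {G : Type*} [Group G] [TopologicalSpace G] [DiscreteTopology G]
  {ν : @Measure (Set G) (hullMS G)}

theorem measure_setOf_inv_mem_eq (g : G)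
    (hinv : @Measure.map (Set G) (Set G) (hullMS G) (hullMS G) (fun A => g • A) ν = ν) :
    ν {A : Set G | g⁻¹ ∈ A} = ν {A : Set G | 1 ∈ A} := by
  let _ := chabautyFell G
  let _ := hullMS G
  have _ : BorelSpace (Set G) := ⟨rfl⟩
  have hpres : MeasurePreserving (g • · : Set G → Set G) ν ν :=
    ⟨(chabautyFell_continuous_smul g).measurable, hinv⟩
  convert hpres.measure_preimage
    (chabautyFell_isOpen_setOf_mem (1 : G)).measurableSet.nullMeasurableSet using 2
  ext A
  simp [Set.mem_smul_set_iff_inv_smul_mem]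

theorem measure_setOf_one_mem_ne_zero [Countable G] (hν : ν ≠ 0)
    (hinv : ∀ g : G,
      @Measure.map (Set G) (Set G) (hullMS G) (hullMS G) (fun A => g • A) ν = ν)
    (hempty : ν {(∅ : Set G)} = 0) :
    ν {A : Set G | 1 ∈ A} ≠ 0 := by
  intro h
  have hmem : ∀ g : G, ν {A : Set G | g ∈ A} = 0 := fun g => by
    simpa [h] using measure_setOf_inv_mem_eq g⁻¹ (hinv g⁻¹)
  have hcover : Set.univ ⊆ {(∅ : Set G)} ∪ ⋃ g : G, {A : Set G | g ∈ A} := fun A _ => by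
    simpa [Set.eq_empty_iff_forall_notMem] using em (A = ∅)
  refine hν (Measure.measure_univ_eq_zero.mp (measure_mono_null hcover ?_))
  exact measure_union_null hempty (measure_iUnion_null hmem)

theorem aedisjoint_setOf_mem_of_inv_mul_notMem {Λ : Set G}
    (hsupp : ν (rightHull Λ)ᶜ = 0) {x y : G} (hxy : x⁻¹ * y ∉ Λ⁻¹ * Λ) :
    AEDisjoint ν {A : Set G | x ∈ A} {A : Set G | y ∈ A} :=
  measure_mono_null (fun _ hA hhull => hxy (inv_mul_mem_of_mem_rightHull hhull hA.1 hA.2)) hsupp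

end InvariantMeasure

/-- If `G` is a countable discrete group and `Λ ⊆ G` a subset whose
right-hull carries a non-trivial `G`-invariant probability measure (zero mass on `∅`),
then `Λ⁻¹Λ` is right-syndetic: `Λ⁻¹Λ ⬝ F = G` for some finite `F`. -/
theorem folner_right_syndetic
    {G : Type*} [Group G] [TopologicalSpace G] [DiscreteTopology G] [Countable G]
    (Λ : Set G)
    (ν : @Measure (Set G) (hullMS G))
    (hprob : ν Set.univ = 1) (hsupp : ν (rightHull Λ) = 1)
    (hinv : ∀ g : G,
      @Measure.map (Set G) (Set G) (hullMS G) (hullMS G) (fun A => g • A) ν = ν)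
    (hempty : ν {(∅ : Set G)} = 0) :
    ∃ F : Finset G, (Λ⁻¹ * Λ) * (F : Set G) = Set.univ := by
  let _ := chabautyFell G
  let _ := hullMS G
  have _ : BorelSpace (Set G) := ⟨rfl⟩
  have _ : IsProbabilityMeasure ν := ⟨hprob⟩
  by_contra! hsyn
  obtain ⟨u, hu⟩ := exists_seq_mul_inv_notMem_of_forall_mul_ne_univ hsyn
  let E : ℕ → Set (Set G) := fun i => {A | (u i)⁻¹ ∈ A}
  have hnull : ν (rightHull Λ)ᶜ = 0 :=
    (prob_compl_eq_zero_iff isClosed_closure.measurableSet).mpr hsupp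
  have hdisj : Pairwise (Function.onFun (AEDisjoint ν) E) := by
    refine fun i j hij => hij.lt_or_gt.elim (fun h => ?_) (fun h => ?_)
    · refine (aedisjoint_setOf_mem_of_inv_mul_notMem hnull ?_).symm
      simpa using hu i j h
    · refine aedisjoint_setOf_mem_of_inv_mul_notMem hnull ?_
      simpa using hu j i h
  have hfin := Measure.finite_const_le_meas_of_disjoint_iUnion₀ ν
    (pos_iff_ne_zero.mpr (measure_setOf_one_mem_ne_zero (NeZero.ne ν) hinv hempty))
    (fun i => (chabautyFell_isOpen_setOf_mem _).measurableSet.nullMeasurableSet) hdisj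
    (measure_ne_top ν _)
  simp only [measure_setOf_inv_mem_eq _ (hinv _), le_refl, Set.ofPred_true] at hfin
  exact Set.infinite_univ hfin
end
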